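/- arXiv:1511.09469 — 3 statements merged into one kernel-verified Lean document; each statement's English description precedes it below -/
import Mathlib

section
/- The distribution of ι̂̂(σ) for σ uniform in S_{2n+1} equals the distribution of ι̂̂(σ) for σ uniform in S_{2n}, which in turn equals the distribution of the writhe w(π) for π uniform in S_{2n+1}. -/
/-- The writhe of a permutation of `ZMod (2n+1)`. -/
def writheP (n : ℕ) (π : ZMod (2 * n + 1) → ZMod (2 * n + 1)) : ℤ :=
  ∑ i : ZMod (2 * n + 1), ∑ j ∈ Finset.range n,
    if (π i).val < (π (i + ((j + 1 : ℕ) : ZMod (2 * n + 1)))).val then 1 else -1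

/-- The bi-alternating inversion number of a permutation of `Fin N`:
`ι̂̂(σ) = ∑_{0 ≤ y < x < N} (−1)^{x+y} sign(σ(x) − σ(y))`. -/
def biAltF (N : ℕ) (σ : Equiv.Perm (Fin N)) : ℤ :=
  ∑ x : Fin N, ∑ y : Fin N,
    if y < x then (-1 : ℤ) ^ ((x : ℕ) + (y : ℕ)) * (if σ y < σ x then 1 else -1) else 0

/-!
Relabel the positions of `Fin (2n+1)` by `x ↦ x/2 ∈ ZMod (2n+1)`. For `y < x`, the point `x/2`
lies one to `n` steps ahead of `y/2` on the cycle exactly when `x - y` is even, and otherwise `y/2`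
lies ahead of `x/2`. Hence the bi-alternating sign `(-1)^(x+y) sign(σ x - σ y)` is the writhe's
sign of the same pair read in cyclic order, and `ι̂̂` on `S_{2n+1}` is the writhe transported along
this relabelling.

The writhe is invariant under rotating positions, so every value is taken `2n+1` times as often as
among permutations fixing `0`. For those, the pairs involving position `0` contribute
`∑_{x=1}^{2n} (-1)^x = 0` to `ι̂̂`, which leaves `ι̂̂` of the induced permutation in `S_{2n}`.
-/

open Finset

theorem sum_sum_eq_sum_sum_lt_add_swap {ι M : Type*} [Fintype ι] [LinearOrder ι]
    [AddCommMonoid M] (F : ι → ι → M) (hF : ∀ x, F x x = 0) :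
    ∑ x, ∑ y, F x y = ∑ x, ∑ y, if y < x then F x y + F y x else 0 := by
  have hsplit : ∀ x y, F x y = (if y < x then F x y else 0) + (if x < y then F x y else 0) := by
    intro x y
    rcases lt_trichotomy x y with h | rfl | h
    · simp [h, h.not_gt]
    · simp [hF]
    · simp [h, h.not_gt]
  calc ∑ x, ∑ y, F x y
      = ∑ x, ∑ y, (if y < x then F x y else 0) + ∑ y, ∑ x, (if x < y then F x y else 0) := by
        rw [sum_comm (γ := ι) (f := fun y x => if x < y then F x y else 0),
          ← sum_add_distrib]
        exact sum_congr rfl fun x _ => by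
          rw [← sum_add_distrib]; exact sum_congr rfl fun y _ => hsplit x y
    _ = ∑ x, ∑ y, if y < x then F x y + F y x else 0 := by
        simp only [← sum_add_distrib, ite_add_ite, add_zero]

theorem ite_lt_one_neg_one_swap {α : Type*} [LinearOrder α] {a b : α} (h : a ≠ b) :
    (if b < a then (1 : ℤ) else -1) = -(if a < b then 1 else -1) := by
  rcases h.lt_or_gt with h | h
  · simp [h, h.not_gt]
  · simp [h, h.not_gt]

theorem sum_fin_neg_one_pow_succ_of_even {N : ℕ} (hN : Even N) :
    ∑ x : Fin N, (-1 : ℤ) ^ ((x : ℕ) + 1) = 0 := by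
  simp only [pow_succ, ← sum_mul, Fin.sum_neg_one_pow, hN, if_true, zero_mul]

theorem card_filter_eq_card_mul_card_filter_apply_zero {G : Type*} [AddGroup G] [Fintype G]
    [DecidableEq G] (p : Equiv.Perm G → Prop) [DecidablePred p]
    (hp : ∀ π s, p (π * Equiv.addRight s) ↔ p π) :
    #{π | p π} = Fintype.card G * #{π | p π ∧ π 0 = 0} := by
  rw [card_eq_sum_card_fiberwise (f := fun π => π.symm 0) (t := univ) fun _ _ => mem_univ _,
    ← card_univ, ← smul_eq_mul, ← sum_const]
  refine sum_congr rfl fun s _ => card_equiv (Equiv.mulRight (Equiv.addRight s)) fun π => ?_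
  simp only [mem_filter, mem_univ, true_and, Equiv.coe_mulRight, Equiv.Perm.coe_mul,
    Function.comp_apply, Equiv.coe_addRight, zero_add, hp]
  exact and_congr_right' (π.symm_apply_eq.trans eq_comm)

def zmodValEquiv (m : ℕ) [NeZero m] : ZMod m ≃ Fin m where
  toFun a := ⟨a.val, a.val_lt⟩
  invFun x := (x : ℕ)
  left_inv a := ZMod.natCast_zmod_val a
  right_inv x := Fin.ext (ZMod.val_cast_of_lt x.isLt)

theorem zmodValEquiv_lt_iff {m : ℕ} [NeZero m] {a b : ZMod m} :
    zmodValEquiv m a < zmodValEquiv m b ↔ a.val < b.val := Iff.rfl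

theorem zmodValEquiv_zero {m : ℕ} [NeZero m] : zmodValEquiv m 0 = 0 :=
  Fin.ext (ZMod.val_zero)

section Cycle

variable (n : ℕ)

theorem natCast_two_mul_add_one_self : (2 * n + 1 : ZMod (2 * n + 1)) = 0 := by
  exact_mod_cast ZMod.natCast_self (2 * n + 1)

def IsAhead (a b : ZMod (2 * n + 1)) : Prop := (b - a).val ∈ Icc 1 n

instance (a b : ZMod (2 * n + 1)) : Decidable (IsAhead n a b) :=
  inferInstanceAs (Decidable (_ ∈ _))

variable {n}

theorem IsAhead.not_swap {a b : ZMod (2 * n + 1)} (h : IsAhead n a b) : ¬ IsAhead n b a := by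
  unfold IsAhead at *
  rw [mem_Icc] at *
  have : NeZero (b - a) := ⟨fun h0 => by simp [h0] at h⟩
  rw [← neg_sub, ZMod.val_neg_of_ne_zero]
  omega

theorem isAhead_mul_of_even {x y : ℕ} (hyx : y < x) (hx : x ≤ 2 * n) (h : Even (x + y)) :
    IsAhead n ((n + 1) * y) ((n + 1) * x) := by
  obtain ⟨m, rfl⟩ : ∃ m, x = y + 2 * m := ⟨(x - y) / 2, by obtain ⟨r, hr⟩ := h; omega⟩
  have hsub : ((n + 1) * (y + 2 * m : ℕ) - (n + 1) * y : ZMod (2 * n + 1)) = m := by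
    push_cast
    linear_combination m * natCast_two_mul_add_one_self n
  rw [IsAhead, hsub, ZMod.val_natCast_of_lt (by omega), mem_Icc]
  omega

theorem isAhead_mul_of_odd {x y : ℕ} (hyx : y < x) (hx : x ≤ 2 * n) (h : Odd (x + y)) :
    IsAhead n ((n + 1) * x) ((n + 1) * y) := by
  obtain ⟨m, rfl⟩ : ∃ m, x = y + 2 * m + 1 := ⟨(x - y) / 2, by obtain ⟨r, hr⟩ := h; omega⟩
  have hsub : ((n + 1) * y - (n + 1) * (y + 2 * m + 1 : ℕ) : ZMod (2 * n + 1)) = (n - m : ℕ) := by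
    rw [Nat.cast_sub (by omega)]
    push_cast
    linear_combination (-(m : ZMod (2 * n + 1)) - 1) * natCast_two_mul_add_one_self n
  rw [IsAhead, hsub, ZMod.val_natCast_of_lt (by omega), mem_Icc]
  omega

end Cycle

section Writhe

variable (n : ℕ)

def writheTerm (π : ZMod (2 * n + 1) → ZMod (2 * n + 1)) (a b : ZMod (2 * n + 1)) : ℤ :=
  if IsAhead n a b then (if (π a).val < (π b).val then 1 else -1) else 0

theorem writheP_eq_sum_writheTerm (π : ZMod (2 * n + 1) → ZMod (2 * n + 1)) :
    writheP n π = ∑ a, ∑ b, writheTerm n π a b := by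
  refine sum_congr rfl fun a _ => ?_
  simp only [writheTerm, ← sum_filter]
  refine sum_nbij' (fun j => a + ((j + 1 : ℕ) : ZMod (2 * n + 1))) (fun b => (b - a).val - 1)
    ?_ ?_ ?_ ?_ fun _ _ => rfl
  · intro j hj
    rw [mem_range] at hj
    rw [mem_filter, IsAhead, add_sub_cancel_left,
      ZMod.val_natCast_of_lt (show j + 1 < 2 * n + 1 by omega), mem_Icc]
    exact ⟨mem_univ _, by omega, by omega⟩
  · intro b hb
    rw [mem_filter, IsAhead, mem_Icc] at hb
    rw [mem_range]
    omega
  · intro j hj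
    rw [mem_range] at hj
    rw [add_sub_cancel_left, ZMod.val_natCast_of_lt (show j + 1 < 2 * n + 1 by omega),
      Nat.add_sub_cancel]
  · intro b hb
    rw [mem_filter, IsAhead, mem_Icc] at hb
    rw [Nat.sub_add_cancel hb.2.1, ZMod.natCast_zmod_val, add_sub_cancel]

theorem writheP_mul_addRight (π : Equiv.Perm (ZMod (2 * n + 1))) (s : ZMod (2 * n + 1)) :
    writheP n ⇑(π * Equiv.addRight s) = writheP n ⇑π := by
  refine Fintype.sum_equiv (Equiv.addRight s) _ _ fun i => sum_congr rfl fun j _ => ?_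
  simp [add_right_comm]

end Writhe

section Relabel

variable (n : ℕ)

def twoUnit : (ZMod (2 * n + 1))ˣ where
  val := 2
  inv := n + 1
  val_inv := by linear_combination natCast_two_mul_add_one_self n
  inv_val := by linear_combination natCast_two_mul_add_one_self n

def doubling : ZMod (2 * n + 1) ≃ Fin (2 * n + 1) :=
  (twoUnit n).mulLeft.trans (zmodValEquiv _)

theorem doubling_symm_apply (x : Fin (2 * n + 1)) :
    (doubling n).symm x = (n + 1) * ((x : ℕ) : ZMod (2 * n + 1)) := rfl

def toFinPerm : Equiv.Perm (ZMod (2 * n + 1)) ≃ Equiv.Perm (Fin (2 * n + 1)) :=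
  Equiv.equivCongr (doubling n) (zmodValEquiv _)

theorem toFinPerm_apply (π : Equiv.Perm (ZMod (2 * n + 1))) (x : Fin (2 * n + 1)) :
    toFinPerm n π x = zmodValEquiv _ (π ((doubling n).symm x)) := rfl

theorem toFinPerm_apply_zero_eq_zero_iff (π : Equiv.Perm (ZMod (2 * n + 1))) :
    toFinPerm n π 0 = 0 ↔ π 0 = 0 := by
  rw [toFinPerm_apply, doubling_symm_apply, Fin.val_zero, Nat.cast_zero, mul_zero,
    ← zmodValEquiv_zero, (zmodValEquiv _).apply_eq_iff_eq]

theorem writheTerm_add_writheTerm_swap (π : Equiv.Perm (ZMod (2 * n + 1)))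
    {x y : Fin (2 * n + 1)} (hyx : y < x) :
    writheTerm n π ((doubling n).symm y) ((doubling n).symm x)
        + writheTerm n π ((doubling n).symm x) ((doubling n).symm y)
      = (-1) ^ ((x : ℕ) + (y : ℕ)) * (if toFinPerm n π y < toFinPerm n π x then 1 else -1) := by
  have hx : (x : ℕ) ≤ 2 * n := Nat.lt_succ_iff.mp x.isLt
  simp only [writheTerm, toFinPerm_apply, zmodValEquiv_lt_iff]
  rcases Nat.even_or_odd ((x : ℕ) + y) with h | h
  · have hxy := isAhead_mul_of_even hyx hx h
    rw [← doubling_symm_apply, ← doubling_symm_apply] at hxy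
    rw [if_pos hxy, if_neg hxy.not_swap, add_zero, h.neg_one_pow, one_mul]
  · have hxy := isAhead_mul_of_odd hyx hx h
    rw [← doubling_symm_apply, ← doubling_symm_apply] at hxy
    have hne : (π ((doubling n).symm y)).val ≠ (π ((doubling n).symm x)).val := by
      rw [(ZMod.val_injective _).ne_iff, π.injective.ne_iff, (doubling n).symm.injective.ne_iff]
      exact hyx.ne
    rw [if_neg hxy.not_swap, if_pos hxy, zero_add, h.neg_one_pow, ite_lt_one_neg_one_swap hne,
      neg_one_mul]

theorem biAltF_toFinPerm (π : Equiv.Perm (ZMod (2 * n + 1))) :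
    biAltF (2 * n + 1) (toFinPerm n π) = writheP n π := by
  let d := (doubling n).symm
  calc biAltF (2 * n + 1) (toFinPerm n π)
      = ∑ x, ∑ y, if y < x then
          writheTerm n π (d y) (d x) + writheTerm n π (d x) (d y) else 0 :=
        sum_congr rfl fun x _ => sum_congr rfl fun y _ => by
          by_cases hyx : y < x
          · rw [if_pos hyx, if_pos hyx, writheTerm_add_writheTerm_swap n π hyx]
          · rw [if_neg hyx, if_neg hyx]
    _ = ∑ x, ∑ y, writheTerm n π (d y) (d x) :=
        (sum_sum_eq_sum_sum_lt_add_swap _ fun x => by simp [writheTerm, IsAhead]).symm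
    _ = ∑ a, ∑ b, writheTerm n π a b := by
        rw [sum_comm]
        exact Fintype.sum_equiv d _ _ fun y => Fintype.sum_equiv d _ _ fun x => rfl
    _ = writheP n π := (writheP_eq_sum_writheTerm n π).symm

end Relabel

theorem biAltF_decomposeFin_symm_zero {N : ℕ} (hN : Even N) (τ : Equiv.Perm (Fin N)) :
    biAltF (N + 1) (Equiv.Perm.decomposeFin.symm (0, τ)) = biAltF N τ := by
  have hpow : ∀ x y : ℕ, (-1 : ℤ) ^ (x + 1 + (y + 1)) = (-1) ^ (x + y) := fun x y => by
    rw [show x + 1 + (y + 1) = x + y + 2 by ring, pow_add, neg_one_sq, mul_one]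
  unfold biAltF
  simp only [Fin.sum_univ_succ, Fin.not_lt_zero, if_false, sum_const_zero, zero_add,
    Fin.succ_pos, if_true, Equiv.Perm.decomposeFin_symm_apply_zero,
    Equiv.Perm.decomposeFin_symm_apply_succ, Equiv.swap_self, Equiv.refl_apply,
    Fin.succ_lt_succ_iff, Fin.val_succ, Fin.val_zero, add_zero, mul_one, hpow, sum_add_distrib,
    sum_fin_neg_one_pow_succ_of_even hN]

theorem card_filter_biAltF_apply_zero {N : ℕ} (hN : Even N) (k : ℤ) :
    #{σ : Equiv.Perm (Fin (N + 1)) | biAltF (N + 1) σ = k ∧ σ 0 = 0}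
      = #{τ : Equiv.Perm (Fin N) | biAltF N τ = k} := by
  calc #{σ : Equiv.Perm (Fin (N + 1)) | biAltF (N + 1) σ = k ∧ σ 0 = 0}
      = #(({0} : Finset (Fin (N + 1))) ×ˢ
          univ.filter fun τ : Equiv.Perm (Fin N) => biAltF N τ = k) := by
        refine card_equiv Equiv.Perm.decomposeFin fun σ => ?_
        obtain ⟨⟨p, τ⟩, rfl⟩ := Equiv.Perm.decomposeFin.symm.surjective σ
        rcases eq_or_ne p 0 with rfl | hp
        · simp [biAltF_decomposeFin_symm_zero hN]
        · simp [hp, hp.symm]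
    _ = #{τ : Equiv.Perm (Fin N) | biAltF N τ = k} := by rw [card_product, card_singleton, one_mul]

section Counting

variable (n : ℕ) (k : ℤ)

theorem card_filter_biAltF_eq_card_filter_writheP :
    #{σ : Equiv.Perm (Fin (2 * n + 1)) | biAltF (2 * n + 1) σ = k}
      = #{π : Equiv.Perm (ZMod (2 * n + 1)) | writheP n π = k} :=
  card_equiv (toFinPerm n).symm fun σ => by
    simp [← biAltF_toFinPerm]

theorem card_filter_biAltF_apply_zero_eq_card_filter_writheP :
    #{σ : Equiv.Perm (Fin (2 * n + 1)) | biAltF (2 * n + 1) σ = k ∧ σ 0 = 0}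
      = #{π : Equiv.Perm (ZMod (2 * n + 1)) | writheP n π = k ∧ π 0 = 0} :=
  card_equiv (toFinPerm n).symm fun σ => by
    simp [← biAltF_toFinPerm, ← toFinPerm_apply_zero_eq_zero_iff]

theorem card_filter_writheP_eq_mul :
    #{π : Equiv.Perm (ZMod (2 * n + 1)) | writheP n π = k}
      = (2 * n + 1) * #{π : Equiv.Perm (ZMod (2 * n + 1)) | writheP n π = k ∧ π 0 = 0} := by
  rw [card_filter_eq_card_mul_card_filter_apply_zero _ fun π s => by rw [writheP_mul_addRight],
    ZMod.card]

end Counting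

theorem biAlt_writhe_equidistributed_general (n : ℕ) (k : ℤ) :
    ((Finset.univ.filter (fun σ : Equiv.Perm (Fin (2 * n + 1)) => biAltF (2 * n + 1) σ = k)).card
        * Nat.factorial (2 * n)
      = (Finset.univ.filter (fun σ : Equiv.Perm (Fin (2 * n)) => biAltF (2 * n) σ = k)).card
        * Nat.factorial (2 * n + 1)) ∧
    (Finset.univ.filter (fun σ : Equiv.Perm (Fin (2 * n + 1)) => biAltF (2 * n + 1) σ = k)).card
      = (Finset.univ.filter (fun π : Equiv.Perm (ZMod (2 * n + 1)) => writheP n π = k)).card := by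
  have hwrithe := card_filter_biAltF_eq_card_filter_writheP n k
  refine ⟨?_, hwrithe⟩
  rw [hwrithe, card_filter_writheP_eq_mul, ← card_filter_biAltF_apply_zero_eq_card_filter_writheP,
    card_filter_biAltF_apply_zero (even_two_mul n), Nat.factorial_succ]
  ring

/-- The distribution of `ι̂̂` on uniform `S_{2n+1}` equals the distribution of `ι̂̂` on
uniform `S_{2n}`, and equals the distribution of the writhe on uniform `S_{2n+1}`. -/
theorem biAlt_writhe_equidistributed (n : ℕ) (hn : 0 < n) (k : ℤ) :
    ((Finset.univ.filter (fun σ : Equiv.Perm (Fin (2 * n + 1)) => biAltF (2 * n + 1) σ = k)).card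
        * Nat.factorial (2 * n)
      = (Finset.univ.filter (fun σ : Equiv.Perm (Fin (2 * n)) => biAltF (2 * n) σ = k)).card
        * Nat.factorial (2 * n + 1)) ∧
    (Finset.univ.filter (fun σ : Equiv.Perm (Fin (2 * n + 1)) => biAltF (2 * n + 1) σ = k)).card
      = (Finset.univ.filter (fun π : Equiv.Perm (ZMod (2 * n + 1)) => writheP n π = k)).card :=
  biAlt_writhe_equidistributed_general n k
end

section
/- For every π ∈ S_{2n+1} and every x ∈ Z_{2n+1}, |w_x(π)| ≤ min(π(x), 2n − π(x)), where w_x(π) = Σ_{y : π(y) > π(x)} (+1 if y ∈ {x+1,…,x+n}, −1 if y ∈ {x−n,…,x−1}); moreover w(π) = Σ_{x=0}^{2n} w_x(π). -/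
/-- The local writhe at `x`:
`w_x(π) = ∑_{y : π(y) > π(x)} (+1 if y ∈ {x+1,…,x+n}, −1 if y ∈ {x−n,…,x−1})`. -/
def localWrithe (n : ℕ) (π : ZMod (2 * n + 1) → ZMod (2 * n + 1))
    (x : ZMod (2 * n + 1)) : ℤ :=
  ∑ j ∈ Finset.range n,
    ((if (π x).val < (π (x + ((j + 1 : ℕ) : ZMod (2 * n + 1)))).val then (1 : ℤ) else 0)
      - (if (π x).val < (π (x - ((j + 1 : ℕ) : ZMod (2 * n + 1)))).val then (1 : ℤ) else 0))

/-!
Write `a` and `b` for the numbers of `j ∈ {1, …, n}` with `π (x + j) > π x` and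
`π (x - j) > π x`, so that `w_x = a - b`. The points `x ± j` cover `ℤ/(2n+1) \ {x}` exactly once,
so `a + b` counts all values above `π x`, namely `2n - π x`; together with `0 ≤ a, b ≤ n` this
forces `|a - b| ≤ min (π x) (2n - π x)`.

For the sum, each term `sign (π (i + j) - π i)` splits as `[π i < π (i + j)] - [π (i + j) < π i]`,
and the shift `i ↦ i - j` turns the second part into the backward half of `w_i`.
-/

open Finset

namespace ZMod

theorem sum_univ_eq_sum_range {M : Type*} [AddCommMonoid M] {m : ℕ} [NeZero m]
    (G : ZMod m → M) : ∑ y, G y = ∑ k ∈ range m, G k :=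
  sum_nbij' val (↑) (fun a _ => mem_range.2 a.val_lt) (fun _ _ => mem_univ _)
    (fun a _ => natCast_zmod_val a) (fun _ hk => val_natCast_of_lt (mem_range.1 hk))
    (fun a _ => by rw [natCast_zmod_val])

theorem card_filter_lt_val (m : ℕ) [NeZero m] (v : ℕ) :
    #{z : ZMod m | v < z.val} = m - 1 - v := by
  rw [show m - 1 - v = m - v - 1 by omega, ← Nat.card_Ioo]
  refine card_nbij' val (↑) (fun z hz => ?_) (fun k hk => ?_) (fun z _ => natCast_zmod_val z)
    (fun k hk => val_natCast_of_lt (mem_Ioo.1 hk).2)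
  · simpa using ⟨(mem_filter.1 hz).2, z.val_lt⟩
  · have hk := mem_Ioo.1 hk
    simpa [val_natCast_of_lt hk.2] using hk.1

theorem natCast_ne_zero_of_pos_of_lt {m k : ℕ} (h₀ : 0 < k) (hk : k < m) : (k : ZMod m) ≠ 0 := by
  rw [Ne, natCast_eq_zero_iff]
  exact Nat.not_dvd_of_pos_of_lt h₀ hk

theorem sum_univ_eq_add_sum_add_sub {M : Type*} [AddCommMonoid M] (n : ℕ)
    (G : ZMod (2 * n + 1) → M) (x : ZMod (2 * n + 1)) :
    ∑ y, G y = G x + ∑ j ∈ range n,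
      (G (x + ((j + 1 : ℕ) : ZMod (2 * n + 1))) + G (x - ((j + 1 : ℕ) : ZMod (2 * n + 1)))) := by
  have hneg : ∀ k ∈ range n,
      ((n + 1 + k : ℕ) : ZMod (2 * n + 1)) = -((n - 1 - k + 1 : ℕ) : ZMod (2 * n + 1)) := by
    intro k hk
    rw [eq_neg_iff_add_eq_zero, ← Nat.cast_add, natCast_eq_zero_iff]
    exact ⟨1, by have := mem_range.1 hk; omega⟩
  calc ∑ y, G y = ∑ y, G (x + y) := (Equiv.sum_comp (Equiv.addLeft x) G).symm
    _ = ∑ k ∈ range (n + 1 + n), G (x + k) := by rw [sum_univ_eq_sum_range]; congr 2; omega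
    _ = G x + (∑ j ∈ range n, G (x + ((j + 1 : ℕ) : ZMod (2 * n + 1))) +
          ∑ k ∈ range n, G (x + ((n + 1 + k : ℕ) : ZMod (2 * n + 1)))) := by
      rw [sum_range_add, sum_range_succ', Nat.cast_zero, add_zero]
      abel
    _ = _ := by
      rw [sum_add_distrib,
        ← sum_range_reflect (fun j => G (x - ((j + 1 : ℕ) : ZMod (2 * n + 1)))) n]
      refine congrArg _ (congrArg _ (sum_congr rfl fun k hk => ?_))
      rw [hneg k hk, sub_eq_add_neg]

end ZMod

theorem sum_boole_mem_Icc {ι : Type*} (s : Finset ι) (p : ι → Prop) [DecidablePred p] :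
    (∑ i ∈ s, if p i then 1 else 0 : ℤ) ∈ Set.Icc 0 (#s : ℤ) := by
  rw [sum_boole]
  exact ⟨Nat.cast_nonneg _, by exact_mod_cast card_filter_le s p⟩

theorem ite_lt_one_neg_one_eq_sub {α : Type*} [LinearOrder α] {a b : α} (h : a ≠ b) :
    (if a < b then (1 : ℤ) else -1) = (if a < b then 1 else 0) - (if b < a then 1 else 0) := by
  rcases h.lt_or_gt with h | h <;> simp [h, h.not_gt]

theorem abs_sub_le_min_of_add_eq {n a b v : ℤ} (ha : a ∈ Set.Icc 0 n) (hb : b ∈ Set.Icc 0 n)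
    (hab : a + b = 2 * n - v) : |a - b| ≤ min v (2 * n - v) := by
  obtain ⟨ha₀, ha₁⟩ := ha
  obtain ⟨hb₀, hb₁⟩ := hb
  exact le_min (abs_le.2 ⟨by omega, by omega⟩) (abs_le.2 ⟨by omega, by omega⟩)

theorem sum_ite_val_lt_around_eq (n : ℕ) (π : Equiv.Perm (ZMod (2 * n + 1)))
    (x : ZMod (2 * n + 1)) :
    ∑ j ∈ range n,
      ((if (π x).val < (π (x + ((j + 1 : ℕ) : ZMod (2 * n + 1)))).val then (1 : ℤ) else 0)
        + (if (π x).val < (π (x - ((j + 1 : ℕ) : ZMod (2 * n + 1)))).val then (1 : ℤ) else 0))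
      = 2 * n - (π x).val := by
  have hall : ∑ y, (if (π x).val < (π y).val then (1 : ℤ) else 0) = 2 * n - (π x).val := by
    rw [Equiv.sum_comp π (fun z => if (π x).val < z.val then (1 : ℤ) else 0), sum_boole,
      ZMod.card_filter_lt_val]
    have := (π x).val_lt
    omega
  simpa using (ZMod.sum_univ_eq_add_sum_add_sub n _ x).symm.trans hall

theorem writheP_eq_sum_localWrithe (n : ℕ) (π : Equiv.Perm (ZMod (2 * n + 1))) :
    writheP n π = ∑ x, localWrithe n π x := by
  have hsplit : writheP n π = ∑ x, ∑ j ∈ range n,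
      ((if (π x).val < (π (x + ((j + 1 : ℕ) : ZMod (2 * n + 1)))).val then (1 : ℤ) else 0)
        - (if (π (x + ((j + 1 : ℕ) : ZMod (2 * n + 1)))).val < (π x).val then (1 : ℤ) else 0)) := by
    refine sum_congr rfl fun x _ => sum_congr rfl fun j hj => ite_lt_one_neg_one_eq_sub ?_
    have hstep : ((j + 1 : ℕ) : ZMod (2 * n + 1)) ≠ 0 :=
      ZMod.natCast_ne_zero_of_pos_of_lt j.succ_pos (by have := mem_range.1 hj; omega)
    exact fun h => hstep (by simpa using π.injective (ZMod.val_injective _ h))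
  have hshift : ∀ c : ZMod (2 * n + 1), ∑ x, (if (π (x + c)).val < (π x).val then (1 : ℤ) else 0)
      = ∑ x, (if (π x).val < (π (x - c)).val then (1 : ℤ) else 0) := fun c =>
    (Equiv.sum_comp (Equiv.subRight c) _).symm.trans (by simp)
  simp only [hsplit, localWrithe, sum_sub_distrib]
  congr 1
  rw [sum_comm, sum_congr rfl fun j _ => hshift _, sum_comm]

/-- `|w_x(π)| ≤ min(π(x), 2n − π(x))` for every `x`, and `w(π) = ∑_x w_x(π)`. -/
theorem localWrithe_bound_and_sum (n : ℕ) (π : Equiv.Perm (ZMod (2 * n + 1))) :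
    (∀ x : ZMod (2 * n + 1),
      |localWrithe n π x| ≤ (min ((π x).val) (2 * n - (π x).val) : ℤ)) ∧
    writheP n π = ∑ x : ZMod (2 * n + 1), localWrithe n π x := by
  refine ⟨fun x => ?_, writheP_eq_sum_localWrithe n π⟩
  rw [localWrithe, sum_sub_distrib]
  refine abs_sub_le_min_of_add_eq ?_ ?_ ?_
  · simpa using sum_boole_mem_Icc (range n) _
  · simpa using sum_boole_mem_Icc (range n) _
  · rw [← sum_add_distrib]
    exact sum_ite_val_lt_around_eq n π x
end

section
/- For a uniformly random permutation π ∈ S_{2n+1}, the second moment of the writhe is E[w(π)²] = (2n² + n)/3. -/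
open Finset Equiv Function
open scoped Nat

section LinearOrder

variable {β : Type*} [LinearOrder β]

def ltSign (x y : β) : ℤ := if x < y then 1 else -1

lemma ltSign_swap {x y : β} (h : x ≠ y) : ltSign y x = -ltSign x y := by
  rcases h.lt_or_gt with h | h <;> simp [ltSign, h, h.not_gt]

lemma ltSign_mul_self (x y : β) : ltSign x y * ltSign x y = 1 := by
  unfold ltSign; split_ifs <;> norm_num

-- The least and the greatest of `x, y, z` contribute `1` each, the middle one `-1`.
lemma ltSign_triangle {x y z : β} (hxy : x ≠ y) (hxz : x ≠ z) (hyz : y ≠ z) :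
    ltSign x y * ltSign x z + ltSign y x * ltSign y z + ltSign z x * ltSign z y = 1 := by
  unfold ltSign
  rcases hxy.lt_or_gt with h₁ | h₁ <;> rcases hxz.lt_or_gt with h₂ | h₂ <;>
    rcases hyz.lt_or_gt with h₃ | h₃ <;> simp [h₁, h₂, h₃, h₁.not_gt, h₂.not_gt, h₃.not_gt] <;>
    order

end LinearOrder

section Correlation

variable {α β : Type*} [Fintype α] [DecidableEq α] [LinearOrder β] {f : α → β}

def signCorr (f : α → β) (a b c d : α) : ℤ :=
  ∑ π : Perm α, ltSign (f (π a)) (f (π b)) * ltSign (f (π c)) (f (π d))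

lemma signCorr_perm (f : α → β) (τ : Perm α) (a b c d : α) :
    signCorr f (τ a) (τ b) (τ c) (τ d) = signCorr f a b c d :=
  Equiv.sum_comp (Equiv.mulRight τ) fun π => ltSign (f (π a)) (f (π b)) * ltSign (f (π c)) (f (π d))

lemma signCorr_comm (f : α → β) (a b c d : α) : signCorr f a b c d = signCorr f c d a b := by
  simp only [signCorr, mul_comm]

lemma signCorr_swap_left (hf : Injective f) {a b : α} (hab : a ≠ b) (c d : α) :
    signCorr f b a c d = -signCorr f a b c d := by
  simp only [signCorr, ← sum_neg_distrib]
  refine sum_congr rfl fun π _ => ?_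
  rw [ltSign_swap (hf.ne (π.injective.ne hab)), neg_mul]

lemma signCorr_swap_right (hf : Injective f) (a b : α) {c d : α} (hcd : c ≠ d) :
    signCorr f a b d c = -signCorr f a b c d := by
  rw [signCorr_comm, signCorr_swap_left hf hcd, signCorr_comm]

lemma signCorr_self (f : α → β) (a b : α) : signCorr f a b a b = (Fintype.card α)! := by
  simp [signCorr, ltSign_mul_self, Fintype.card_perm]

lemma signCorr_eq_zero_of_disjoint (hf : Injective f) {a b c d : α} (hab : a ≠ b)
    (hca : c ≠ a) (hcb : c ≠ b) (hda : d ≠ a) (hdb : d ≠ b) : signCorr f a b c d = 0 := by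
  have h := signCorr_perm f (swap a b) a b c d
  rw [swap_apply_left, swap_apply_right, swap_apply_of_ne_of_ne hca hcb,
    swap_apply_of_ne_of_ne hda hdb, signCorr_swap_left hf hab] at h
  omega

-- The three correlations summed in `ltSign_triangle` are exchanged by transpositions.
lemma three_mul_signCorr_of_eq_left (hf : Injective f) {a b d : α} (hab : a ≠ b) (had : a ≠ d)
    (hbd : b ≠ d) : 3 * signCorr f a b a d = (Fintype.card α)! := by
  have hsum : signCorr f a b a d + signCorr f b a b d + signCorr f d a d b =
      (Fintype.card α)! := by
    simp only [signCorr, ← sum_add_distrib]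
    rw [sum_congr rfl fun π _ => ltSign_triangle (hf.ne (π.injective.ne hab))
      (hf.ne (π.injective.ne had)) (hf.ne (π.injective.ne hbd))]
    simp [Fintype.card_perm]
  have hb : signCorr f b a b d = signCorr f a b a d := by
    simpa [swap_apply_of_ne_of_ne had.symm hbd.symm] using signCorr_perm f (swap a b) a b a d
  have hd : signCorr f d a d b = signCorr f a b a d := by
    rw [signCorr_comm]
    simpa [swap_apply_of_ne_of_ne hab.symm hbd] using signCorr_perm f (swap a d) a b a d
  omega

end Correlation

section OrientedGraph

variable {α β : Type*} [Fintype α] [DecidableEq α] [LinearOrder β] {f : α → β}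

def incidence (e : α × α) (v : α) : ℤ := (if e.1 = v then 1 else 0) - (if e.2 = v then 1 else 0)

lemma sum_incidence_mul_incidence (a b c d : α) :
    ∑ v, incidence (a, b) v * incidence (c, d) v =
      (if a = c then 1 else 0) - (if a = d then 1 else 0) -
        (if b = c then 1 else 0) + (if b = d then 1 else 0) := by
  simp only [incidence, mul_sub, mul_ite, mul_one, mul_zero, sum_sub_distrib,
    sum_ite_eq, mem_univ, if_true]
  ring

lemma three_mul_signCorr (hf : Injective f) {a b c d : α} (hab : a ≠ b) (hcd : c ≠ d)
    (hrev : ¬(a = d ∧ b = c)) :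
    3 * signCorr f a b c d = (Fintype.card α)! *
      ((if (a, b) = (c, d) then 1 else 0) + ∑ v, incidence (a, b) v * incidence (c, d) v) := by
  simp only [sum_incidence_mul_incidence, Prod.mk.injEq]
  by_cases hac : a = c
  · subst hac
    by_cases hbd : b = d
    · subst hbd
      simp [signCorr_self, hab, hab.symm]
      ring
    · simp [three_mul_signCorr_of_eq_left hf hab hcd hbd, hbd, hcd, hab.symm]
  by_cases hbd : b = d
  · subst hbd
    have h : signCorr f a b c b = signCorr f b a b c := by
      rw [signCorr_swap_right hf _ _ hcd, signCorr_swap_left hf hab, neg_neg]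
    simp [h, three_mul_signCorr_of_eq_left hf hab.symm hcd.symm hac, hac, hab, hcd.symm]
  by_cases had : a = d
  · subst had
    have hbc : b ≠ c := fun h => hrev ⟨rfl, h⟩
    simp [signCorr_swap_right hf _ _ hcd.symm, three_mul_signCorr_of_eq_left hf hab hcd.symm hbc,
      hac, hbc, hbd]
  by_cases hbc : b = c
  · subst hbc
    have h : signCorr f a b b d = -signCorr f b a b d := by
      rw [signCorr_swap_left hf hab, neg_neg]
    simp [h, three_mul_signCorr_of_eq_left hf hab.symm hcd had, hac, had, hbd]
  · simp [signCorr_eq_zero_of_disjoint hf hab (Ne.symm hac) (Ne.symm hbc) (Ne.symm had)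
      (Ne.symm hbd), hac, hbc, had, hbd]

theorem three_mul_sum_sq_sum_ltSign (hf : Injective f) (E : Finset (α × α))
    (hloop : ∀ e ∈ E, e.1 ≠ e.2) (hanti : ∀ e ∈ E, e.swap ∉ E) :
    3 * ∑ π : Perm α, (∑ e ∈ E, ltSign (f (π e.1)) (f (π e.2))) ^ 2 =
      (Fintype.card α)! * (#E + ∑ v, (∑ e ∈ E, incidence e v) ^ 2) := by
  calc 3 * ∑ π : Perm α, (∑ e ∈ E, ltSign (f (π e.1)) (f (π e.2))) ^ 2
      = ∑ e ∈ E, ∑ e' ∈ E, 3 * signCorr f e.1 e.2 e'.1 e'.2 := by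
        simp only [sq, sum_mul_sum]
        simp only [signCorr, mul_sum]
        rw [sum_comm]
        exact sum_congr rfl fun e _ => sum_comm
    _ = ∑ e ∈ E, ∑ e' ∈ E, (Fintype.card α)! *
          ((if e = e' then 1 else 0) + ∑ v, incidence e v * incidence e' v) := by
        refine sum_congr rfl fun e he => sum_congr rfl fun e' he' => ?_
        refine three_mul_signCorr hf (hloop e he) (hloop e' he') fun h => hanti e he ?_
        rwa [Prod.swap, h.1, h.2]
    _ = (Fintype.card α)! * (∑ e ∈ E, ∑ e' ∈ E, (if e = e' then (1 : ℤ) else 0) +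
          ∑ e ∈ E, ∑ e' ∈ E, ∑ v, incidence e v * incidence e' v) := by
        simp only [mul_add, mul_sum, sum_add_distrib]
    _ = (Fintype.card α)! * (#E + ∑ v, (∑ e ∈ E, incidence e v) ^ 2) := by
        congr 2
        · simp [sum_ite_eq]
        · simp only [sq, sum_mul_sum]
          rw [eq_comm, sum_comm]
          exact sum_congr rfl fun _ _ => sum_comm

end OrientedGraph

lemma sum_incidence_add_right {G : Type*} [AddGroup G] [Fintype G] [DecidableEq G] (k v : G) :
    ∑ i, incidence (i, i + k) v = 0 := by
  simp only [incidence, sum_sub_distrib]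
  exact sub_eq_zero.2 (Equiv.sum_comp (Equiv.addRight k) fun i => if i = v then (1 : ℤ) else 0).symm

lemma ZMod.natCast_ne_zero_of_pos_of_lt_s15 {m N : ℕ} (h0 : 0 < m) (hN : m < N) :
    (m : ZMod N) ≠ 0 := by
  rw [Ne, ZMod.natCast_eq_zero_iff]
  exact Nat.not_dvd_of_pos_of_lt h0 hN

section Circulant

variable {n : ℕ}

def circulantArcs (n : ℕ) : Finset (ZMod (2 * n + 1) × ZMod (2 * n + 1)) :=
  (univ ×ˢ range n).image fun p => (p.1, p.1 + ((p.2 + 1 : ℕ) : ZMod (2 * n + 1)))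

lemma circulantArcs_injOn :
    Set.InjOn (fun p : ZMod (2 * n + 1) × ℕ => (p.1, p.1 + ((p.2 + 1 : ℕ) : ZMod (2 * n + 1))))
      (univ ×ˢ range n : Finset (ZMod (2 * n + 1) × ℕ)) := by
  rintro ⟨i, j⟩ hj ⟨i', j'⟩ hj' h
  simp only [coe_product, coe_univ, coe_range, Set.mem_prod, Set.mem_univ, Set.mem_Iio,
    true_and] at hj hj'
  simp only [Prod.mk.injEq] at h
  obtain ⟨rfl, h⟩ := h
  have h := congrArg ZMod.val (add_left_cancel h)
  rw [ZMod.val_cast_of_lt (by omega), ZMod.val_cast_of_lt (by omega)] at h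
  rw [Nat.succ_injective h]

lemma card_circulantArcs : #(circulantArcs n) = (2 * n + 1) * n := by
  rw [circulantArcs, card_image_of_injOn circulantArcs_injOn, card_product, card_univ, ZMod.card,
    card_range]

lemma fst_ne_snd_of_mem_circulantArcs {e : ZMod (2 * n + 1) × ZMod (2 * n + 1)}
    (he : e ∈ circulantArcs n) : e.1 ≠ e.2 := by
  obtain ⟨⟨i, j⟩, hj, rfl⟩ := mem_image.1 he
  have hj : j < n := mem_range.1 (mem_product.1 hj).2
  simpa using
    ZMod.natCast_ne_zero_of_pos_of_lt_s15 (m := j + 1) (N := 2 * n + 1) (by omega) (by omega)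

lemma swap_notMem_circulantArcs {e : ZMod (2 * n + 1) × ZMod (2 * n + 1)}
    (he : e ∈ circulantArcs n) : e.swap ∉ circulantArcs n := by
  obtain ⟨⟨i, j⟩, hj, rfl⟩ := mem_image.1 he
  intro h
  obtain ⟨⟨i', j'⟩, hj', h⟩ := mem_image.1 h
  have hj : j < n := mem_range.1 (mem_product.1 hj).2
  have hj' : j' < n := mem_range.1 (mem_product.1 hj').2
  simp only [Prod.swap_prod_mk, Prod.mk.injEq] at h
  obtain ⟨rfl, h⟩ := h
  refine ZMod.natCast_ne_zero_of_pos_of_lt_s15 (m := j + 1 + (j' + 1)) (N := 2 * n + 1)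
    (by omega) (by omega) ?_
  push_cast at h ⊢
  linear_combination h

lemma sum_incidence_circulantArcs (v : ZMod (2 * n + 1)) :
    ∑ e ∈ circulantArcs n, incidence e v = 0 := by
  rw [circulantArcs, sum_image circulantArcs_injOn, sum_product, sum_comm]
  exact sum_eq_zero fun j _ => sum_incidence_add_right ((j + 1 : ℕ) : ZMod (2 * n + 1)) v

lemma writheP_eq_sum_circulantArcs (π : Perm (ZMod (2 * n + 1))) :
    writheP n π = ∑ e ∈ circulantArcs n, ltSign (π e.1).val (π e.2).val := by
  rw [circulantArcs, sum_image circulantArcs_injOn, sum_product]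
  simp only [writheP, ltSign]

end Circulant

/-- For a uniformly random `π ∈ S_{2n+1}`, `E[w(π)²] = (2n² + n)/3`; equivalently,
`3 · ∑_π w(π)² = (2n² + n) · (2n+1)!`. -/
theorem writhe_second_moment (n : ℕ) :
    3 * ∑ π : Equiv.Perm (ZMod (2 * n + 1)), (writheP n π) ^ 2 =
      (2 * (n : ℤ) ^ 2 + n) * (Nat.factorial (2 * n + 1) : ℤ) := by
  have h := three_mul_sum_sq_sum_ltSign (ZMod.val_injective (2 * n + 1)) (circulantArcs n)
    (fun _ => fst_ne_snd_of_mem_circulantArcs) fun _ => swap_notMem_circulantArcs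
  simp only [← writheP_eq_sum_circulantArcs, card_circulantArcs, sum_incidence_circulantArcs,
    ZMod.card, zero_pow two_ne_zero, sum_const_zero, add_zero] at h
  rw [h]
  push_cast
  ring
end
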